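/- arXiv:2105.02861 — 2 statements merged into one kernel-verified Lean document; each statement's English description precedes it below -/
import Mathlib

section
/- Under the stated cell-problem hypotheses, the effective magnetic permeability matrix is uniformly positive definite: for every ζ ∈ ℝ^d, μ^eff ζ · ζ ≥ Λ⁻¹ |ζ|². -/
/-!
Testing the cell problem for `ω^k` against `ω^j` turns `μ^eff_{jk}` into the energy
`∫_Y μ (e^k + ∇ω^k) · (e^j + ∇ω^j)`, so `μ^eff ζ · ζ = ∫_Y μ |v|²` for
`v = Σ_k ζ_k (e^k + ∇ω^k)`. As `μ ≥ Λ⁻¹` and `Y` is a probability space, Jensen gives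
`μ^eff ζ · ζ ≥ Λ⁻¹ |∫_Y v|²`, and `∫_Y v = ζ` because the gradient of a periodic function has
mean zero over the cell: by the divergence theorem the fluxes through opposite faces cancel.
-/

open MeasureTheory Finset Set
open scoped RealInnerProductSpace

def unitCube (ι : Type*) [Fintype ι] : Set (EuclideanSpace ℝ ι) :=
  {y | ∀ i, y i ∈ Ioo (0 : ℝ) 1}

section UnitCube
variable {ι : Type*} [Fintype ι]

theorem unitCube_eq_preimage :
    unitCube ι = WithLp.ofLp ⁻¹' univ.pi fun _ : ι => Ioo (0 : ℝ) 1 := by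
  ext y; simp [unitCube]

theorem volume_unitCube : volume (unitCube ι) = 1 := by
  rw [unitCube_eq_preimage, (PiLp.volume_preserving_ofLp ι).measure_preimage
    (MeasurableSet.univ_pi fun _ => measurableSet_Ioo).nullMeasurableSet]
  simp [volume_pi_pi]

instance : IsProbabilityMeasure (volume.restrict (unitCube ι)) :=
  ⟨by rw [Measure.restrict_apply_univ, volume_unitCube]⟩

theorem isBounded_unitCube : Bornology.IsBounded (unitCube ι) :=
  ((PiLp.continuousLinearEquiv 2 ℝ fun _ : ι => ℝ).toHomeomorph.isCompact_preimage.2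
    isCompact_Icc).isBounded.subset fun _ hy => ⟨fun i => (hy i).1.le, fun i => (hy i).2.le⟩

theorem Continuous.integrableOn_unitCube {E : Type*} [NormedAddCommGroup E]
    {f : EuclideanSpace ℝ ι → E} (hf : Continuous f) : IntegrableOn f (unitCube ι) :=
  (hf.continuousOn.integrableOn_compact isBounded_unitCube.isCompact_closure).mono_set
    subset_closure

end UnitCube

section Divergence
variable {E : Type*} [NormedAddCommGroup E] [NormedSpace ℝ E]

theorem integral_Icc_fderiv_single_eq_zero {n : ℕ} {a b : Fin (n + 1) → ℝ} (hle : a ≤ b)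
    {f : (Fin (n + 1) → ℝ) → E} (hf : ContDiff ℝ 1 f) (i : Fin (n + 1))
    (hfaces : ∀ x, f (i.insertNth (b i) x) = f (i.insertNth (a i) x)) :
    ∫ x in Icc a b, fderiv ℝ f x (Pi.single i 1) = 0 := by
  have hdiv : ∀ x, ∑ j, (if j = i then fderiv ℝ f x else 0) (Pi.single j 1) =
      fderiv ℝ f x (Pi.single i 1) := fun x => by
    rw [Finset.sum_eq_single i (fun j _ hj => by simp [hj]) (by simp), if_pos rfl]
  have key := integral_divergence_of_hasFDerivAt_off_countable' a b hle
    (fun j x => if j = i then f x else 0) (fun j x => if j = i then fderiv ℝ f x else 0)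
    ∅ countable_empty ?_ ?_ ?_
  · rw [← funext hdiv, key, Finset.sum_eq_single i (fun j _ hj => by simp [hj]) (by simp)]
    simp [hfaces]
  · intro j
    rcases eq_or_ne j i with rfl | hj
    · simpa using hf.continuous.continuousOn
    · simpa [hj] using continuousOn_const
  · intro x _ j
    rcases eq_or_ne j i with rfl | hj
    · simpa using (hf.differentiable one_ne_zero x).hasFDerivAt
    · simpa [hj] using hasFDerivAt_const (0 : E) x
  · simpa only [hdiv] using
      ((hf.continuous_fderiv one_ne_zero).clm_apply continuous_const).continuousOn.integrableOn_Icc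

theorem integral_unitCube_fderiv_single_eq_zero {d : ℕ} {f : EuclideanSpace ℝ (Fin d) → E}
    (hf : ContDiff ℝ 1 f) (i : Fin d) (hper : ∀ y, f (y + EuclideanSpace.single i 1) = f y) :
    ∫ y in unitCube (Fin d), fderiv ℝ f y (EuclideanSpace.single i 1) = 0 := by
  obtain ⟨n, rfl⟩ := Nat.exists_eq_add_one_of_ne_zero (Fin.pos i).ne'
  let L := (PiLp.continuousLinearEquiv 2 ℝ fun _ : Fin (n + 1) => ℝ).symm
  have hfaces : ∀ x, (f ∘ L) (Fin.insertNth (α := fun _ => ℝ) i 1 x) =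
      (f ∘ L) (Fin.insertNth i 0 x) := fun x => by
    have : Fin.insertNth (α := fun _ => ℝ) i 1 x = Fin.insertNth i 0 x + Pi.single i 1 :=
      eq_add_of_sub_eq' (by simp)
    rw [Function.comp_apply, Function.comp_apply, this, map_add]
    exact hper _
  calc ∫ y in unitCube (Fin (n + 1)), fderiv ℝ f y (EuclideanSpace.single i 1)
      = ∫ x in univ.pi fun _ => Ioo 0 1, fderiv ℝ f (L x) (L (Pi.single i 1)) := by
        rw [unitCube_eq_preimage]
        exact (PiLp.volume_preserving_ofLp (Fin (n + 1))).setIntegral_preimage_emb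
          (MeasurableEquiv.toLp 2 (Fin (n + 1) → ℝ)).symm.measurableEmbedding
          (fun x => fderiv ℝ f (L x) (L (Pi.single i 1))) _
    _ = ∫ x in Icc 0 1, fderiv ℝ (f ∘ L) x (Pi.single i 1) := by
        rw [volume_pi, ← setIntegral_congr_set Measure.univ_pi_Ioo_ae_eq_Icc]
        simp [L.comp_right_fderiv]
    _ = 0 := integral_Icc_fderiv_single_eq_zero zero_le_one (hf.comp L.contDiff) i hfaces

end Divergence

theorem ContDiff.continuous_gradient {F : Type*} [NormedAddCommGroup F] [InnerProductSpace ℝ F]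
    [CompleteSpace F] {f : F → ℝ} (hf : ContDiff ℝ 1 f) : Continuous (gradient f) :=
  (InnerProductSpace.toDual ℝ F).symm.continuous.comp (hf.continuous_fderiv one_ne_zero)

theorem integral_unitCube_gradient_eq_zero {d : ℕ} {f : EuclideanSpace ℝ (Fin d) → ℝ}
    (hf : ContDiff ℝ 1 f) (hper : ∀ y i, f (y + EuclideanSpace.single i 1) = f y) :
    ∫ y in unitCube (Fin d), gradient f y = 0 := by
  ext i
  have hcoord : ∀ y, gradient f y i = fderiv ℝ f y (EuclideanSpace.single i 1) := fun y => by
    rw [← inner_gradient_left, EuclideanSpace.inner_single_right, one_mul, conj_trivial]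
  calc (∫ y in unitCube (Fin d), gradient f y) i
      = ∫ y in unitCube (Fin d), gradient f y i :=
        ((EuclideanSpace.proj i).integral_comp_comm
          hf.continuous_gradient.integrableOn_unitCube).symm
    _ = 0 := by
        simp only [hcoord]
        exact integral_unitCube_fderiv_single_eq_zero hf i (hper · i)

theorem integral_unitCube_sum_smul_single_add_gradient {d : ℕ}
    {ω : Fin d → EuclideanSpace ℝ (Fin d) → ℝ} (hω : ∀ k, ContDiff ℝ 1 (ω k))
    (hper : ∀ k y l, ω k (y + EuclideanSpace.single l 1) = ω k y) (ζ : EuclideanSpace ℝ (Fin d)) :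
    ∫ y in unitCube (Fin d), ∑ k, ζ k • (EuclideanSpace.single k 1 + gradient (ω k) y) = ζ := by
  have hint : ∀ k, IntegrableOn
      (fun y => ζ k • (EuclideanSpace.single k (1 : ℝ) + gradient (ω k) y)) (unitCube (Fin d)) :=
    fun k => Continuous.integrableOn_unitCube <| by
      have := (hω k).continuous_gradient
      fun_prop
  rw [integral_finsetSum _ fun k _ => hint k]
  simp_rw [integral_smul]
  conv_rhs => rw [← (EuclideanSpace.basisFun (Fin d) ℝ).sum_repr ζ]
  refine sum_congr rfl fun k _ => ?_
  rw [integral_add (integrable_const _) (hω k).continuous_gradient.integrableOn_unitCube,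
    integral_unitCube_gradient_eq_zero (hω k) (hper k)]
  simp

section InnerProduct
variable {α ι F : Type*} [MeasurableSpace α] {m : Measure α} [NormedAddCommGroup F]
  [InnerProductSpace ℝ F]

theorem integral_mul_norm_sum_smul_sq [Fintype ι] (μ : α → ℝ) (w : ι → α → F) (ζ : ι → ℝ)
    (hint : ∀ j k, Integrable (fun x => μ x * ⟪w k x, w j x⟫) m) :
    ∫ x, μ x * ‖∑ k, ζ k • w k x‖ ^ 2 ∂m =
      ∑ j, ∑ k, (∫ x, μ x * ⟪w k x, w j x⟫ ∂m) * ζ j * ζ k := by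
  have hexpand : ∀ x, μ x * ‖∑ k, ζ k • w k x‖ ^ 2 =
      ∑ j, ∑ k, μ x * ⟪w k x, w j x⟫ * ζ j * ζ k := fun x => by
    simp only [← real_inner_self_eq_norm_sq, sum_inner, inner_sum, real_inner_smul_left,
      real_inner_smul_right, mul_sum]
    exact sum_congr rfl fun j _ => sum_congr rfl fun k _ => by rw [real_inner_comm]; ring
  have hint' : ∀ j k, Integrable (fun x => μ x * ⟪w k x, w j x⟫ * ζ j * ζ k) m :=
    fun j k => ((hint j k).mul_const _).mul_const _
  simp_rw [hexpand]
  rw [integral_finsetSum _ fun j _ => integrable_finsetSum _ fun k _ => hint' j k]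
  refine sum_congr rfl fun j _ => ?_
  rw [integral_finsetSum _ fun k _ => hint' j k]
  simp_rw [integral_mul_const]

theorem norm_integral_sq_le_integral_norm_sq [CompleteSpace F] [IsProbabilityMeasure m] {v : α → F}
    (hv : Integrable v m) (hv2 : Integrable (fun x => ‖v x‖ ^ 2) m) :
    ‖∫ x, v x ∂m‖ ^ 2 ≤ ∫ x, ‖v x‖ ^ 2 ∂m :=
  (convexOn_univ_norm.pow (fun x _ => norm_nonneg x) 2).map_integral_le
    (continuous_norm.pow 2).continuousOn isClosed_univ (ae_of_all _ fun _ => mem_univ _) hv hv2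

theorem mul_norm_integral_sq_le_integral_mul_norm_sq [CompleteSpace F] [IsProbabilityMeasure m]
    {c : ℝ} (hc : 0 ≤ c) {μ : α → ℝ} (hμ : ∀ x, c ≤ μ x) {v : α → F} (hv : Integrable v m)
    (hv2 : Integrable (fun x => ‖v x‖ ^ 2) m) (hμv : Integrable (fun x => μ x * ‖v x‖ ^ 2) m) :
    c * ‖∫ x, v x ∂m‖ ^ 2 ≤ ∫ x, μ x * ‖v x‖ ^ 2 ∂m :=
  calc c * ‖∫ x, v x ∂m‖ ^ 2 ≤ c * ∫ x, ‖v x‖ ^ 2 ∂m := by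
        gcongr
        exact norm_integral_sq_le_integral_norm_sq hv hv2
    _ ≤ ∫ x, μ x * ‖v x‖ ^ 2 ∂m := by
        rw [← integral_const_mul]
        exact integral_mono (hv2.const_mul c) hμv fun x =>
          mul_le_mul_of_nonneg_right (hμ x) (by positivity)

end InnerProduct

theorem effective_permeability_uniformly_positive_definite_general
    (d : ℕ)
    (Y : Set (EuclideanSpace ℝ (Fin d)))
    (hY : Y = {y : EuclideanSpace ℝ (Fin d) | ∀ i, y i ∈ Set.Ioo (0 : ℝ) 1})
    (Λ : ℝ) (hΛ : 0 < Λ)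
    (μ : EuclideanSpace ℝ (Fin d) → ℝ) (hμmeas : Measurable μ)
    (hμbound : ∀ y, Λ⁻¹ ≤ μ y ∧ μ y ≤ Λ)
    (ω : Fin d → EuclideanSpace ℝ (Fin d) → ℝ)
    (hωC1 : ∀ k, ContDiff ℝ 1 (ω k))
    (hωper : ∀ (k : Fin d) (y : EuclideanSpace ℝ (Fin d)) (l : Fin d),
      ω k (y + EuclideanSpace.single l 1) = ω k y)
    (hcell : ∀ j k : Fin d,
      ∫ y in Y, μ y *
        ⟪EuclideanSpace.single j (1 : ℝ) + gradient (ω j) y, gradient (ω k) y⟫ = 0)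
    (μeff : Fin d → Fin d → ℝ)
    (hμeff : ∀ j k : Fin d, μeff j k =
      ∫ y in Y, μ y *
        ⟪EuclideanSpace.single k (1 : ℝ) + gradient (ω k) y,
          EuclideanSpace.single j (1 : ℝ)⟫) :
    ∀ ζ : EuclideanSpace ℝ (Fin d),
      Λ⁻¹ * ‖ζ‖ ^ 2 ≤ ∑ j, ∑ k, μeff j k * ζ j * ζ k := by
  intro ζ
  obtain rfl : Y = unitCube (Fin d) := hY
  set w : Fin d → EuclideanSpace ℝ (Fin d) → EuclideanSpace ℝ (Fin d) :=
    fun k y => EuclideanSpace.single k 1 + gradient (ω k) y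
  set v := fun y => ∑ k, ζ k • w k y
  have hwc : ∀ k, Continuous (w k) := fun k => continuous_const.add (hωC1 k).continuous_gradient
  have hvc : Continuous v := continuous_finsetSum _ fun k _ => (hwc k).const_smul (ζ k)
  have hμint : ∀ {F : EuclideanSpace ℝ (Fin d) → ℝ}, Continuous F →
      IntegrableOn (fun y => μ y * F y) (unitCube (Fin d)) := fun hF =>
    hF.integrableOn_unitCube.bdd_mul hμmeas.aestronglyMeasurable (ae_of_all _ fun y => by
      rw [Real.norm_of_nonneg ((inv_pos.2 hΛ).le.trans (hμbound y).1)]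
      exact (hμbound y).2)
  have hμeff_energy : ∀ j k, μeff j k = ∫ y in unitCube (Fin d), μ y * ⟪w k y, w j y⟫ :=
    fun j k => by
      simp_rw [hμeff, w, inner_add_right, mul_add]
      rw [integral_add (hμint ((hwc k).inner continuous_const))
        (hμint ((hwc k).inner (hωC1 j).continuous_gradient)), hcell k j, add_zero]
  have hmean : ∫ y in unitCube (Fin d), v y = ζ :=
    integral_unitCube_sum_smul_single_add_gradient hωC1 hωper ζ
  calc Λ⁻¹ * ‖ζ‖ ^ 2 = Λ⁻¹ * ‖∫ y in unitCube (Fin d), v y‖ ^ 2 := by rw [hmean]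
    _ ≤ ∫ y in unitCube (Fin d), μ y * ‖v y‖ ^ 2 :=
        mul_norm_integral_sq_le_integral_mul_norm_sq (inv_pos.2 hΛ).le (hμbound · |>.1)
          hvc.integrableOn_unitCube (hvc.norm.pow 2).integrableOn_unitCube (hμint (hvc.norm.pow 2))
    _ = ∑ j, ∑ k, μeff j k * ζ j * ζ k := by
        rw [integral_mul_norm_sum_smul_sq μ w ζ fun j k => hμint ((hwc k).inner (hwc j))]
        simp_rw [hμeff_energy]

/-- Under the cell-problem hypotheses, the effective
magnetic permeability matrix is uniformly positive definite:
`μ^eff ζ · ζ ≥ Λ⁻¹ |ζ|²` for every `ζ ∈ ℝ^d`. -/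
theorem effective_permeability_uniformly_positive_definite
    (d : ℕ) (hd : d = 2 ∨ d = 3)
    (Y : Set (EuclideanSpace ℝ (Fin d)))
    (hY : Y = {y : EuclideanSpace ℝ (Fin d) | ∀ i, y i ∈ Set.Ioo (0 : ℝ) 1})
    (Λ : ℝ) (hΛ : 0 < Λ)
    (μ : EuclideanSpace ℝ (Fin d) → ℝ) (hμmeas : Measurable μ)
    (hμper : ∀ (y : EuclideanSpace ℝ (Fin d)) (k : Fin d),
      μ (y + EuclideanSpace.single k 1) = μ y)
    (hμbound : ∀ y, Λ⁻¹ ≤ μ y ∧ μ y ≤ Λ)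
    (ω : Fin d → EuclideanSpace ℝ (Fin d) → ℝ)
    (hωC1 : ∀ k, ContDiff ℝ 1 (ω k))
    (hωper : ∀ (k : Fin d) (y : EuclideanSpace ℝ (Fin d)) (l : Fin d),
      ω k (y + EuclideanSpace.single l 1) = ω k y)
    (hcell : ∀ j k : Fin d,
      ∫ y in Y, μ y *
        ⟪EuclideanSpace.single j (1 : ℝ) + gradient (ω j) y, gradient (ω k) y⟫ = 0)
    (μeff : Fin d → Fin d → ℝ)
    (hμeff : ∀ j k : Fin d, μeff j k =
      ∫ y in Y, μ y *
        ⟪EuclideanSpace.single k (1 : ℝ) + gradient (ω k) y,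
          EuclideanSpace.single j (1 : ℝ)⟫) :
    ∀ ζ : EuclideanSpace ℝ (Fin d),
      Λ⁻¹ * ‖ζ‖ ^ 2 ≤ ∑ j, ∑ k, μeff j k * ζ j * ζ k :=
  effective_permeability_uniformly_positive_definite_general d Y hY Λ hΛ μ hμmeas hμbound ω hωC1
    hωper hcell μeff hμeff
end

section
/- Under the stated cell-problem orthogonality hypotheses, the biquadratic form of the effective viscosity tensor has the nonnegative integral representation: for all ζ, η ∈ ℝ^d, Υ(ζ,η) := Σ_{i,j,m,n} N^{ij}_{mn} ζ_i ζ_m η_j η_n = ∫_Y ‖Σ_{i,j} ζ_i η_j D(P^{ij} − χ^{ij})(y)‖_F² dy ≥ 0, where ‖·‖_F is the Frobenius norm. -/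
/-!
Write `G^{ij} = D(P^{ij} − χ^{ij})`. Since `G^{mn} = Q^{mn} − D(χ^{mn})` and `A : Q^{mn} = A_{mn}`
for every symmetric `A`, the cell orthogonality turns `N^{ij}_{mn} = ∫_Y G^{ij}_{mn}` into the
Gram entry `∫_Y G^{ij} : G^{mn}`. The biquadratic form is therefore the Gram form of the `G^{ij}`
evaluated at the coefficients `ζ_i η_j`, which is the integral of
`‖Σ ζ_i η_j G^{ij}‖_F² ≥ 0`.
-/

open MeasureTheory Finset

noncomputable section

/-- The symmetrized gradient `D(v) = (∇v + ∇vᵀ)/2` of a vector field `v : ℝ^d → ℝ^d`. -/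
def symGrad {d : ℕ} (v : EuclideanSpace ℝ (Fin d) → EuclideanSpace ℝ (Fin d))
    (y : EuclideanSpace ℝ (Fin d)) : Matrix (Fin d) (Fin d) ℝ :=
  fun m n =>
    (fderiv ℝ v y (EuclideanSpace.single m 1) n + fderiv ℝ v y (EuclideanSpace.single n 1) m) / 2

/-- The Frobenius inner product `A : B` of two `d × d` matrices. -/
def frob {d : ℕ} (A B : Matrix (Fin d) (Fin d) ℝ) : ℝ := ∑ m, ∑ n, A m n * B m n

/-- The field `P^{ij}` given by `(P^{ij}(y))_k = y_j δ_{ik}`. -/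
def Pfield {d : ℕ} (i j : Fin d) (y : EuclideanSpace ℝ (Fin d)) : EuclideanSpace ℝ (Fin d) :=
  EuclideanSpace.single i (y j)

open Bornology

theorem Continuous.integrableOn_of_isBounded {X F : Type*} [MetricSpace X] [ProperSpace X]
    [MeasurableSpace X] [OpensMeasurableSpace X] [NormedAddCommGroup F] {μ : Measure X}
    [IsFiniteMeasureOnCompacts μ] {f : X → F} (hf : Continuous f) {s : Set X}
    (hs : IsBounded s) : IntegrableOn f s μ :=
  (hf.continuousOn.integrableOn_compact hs.isCompact_closure).mono_set subset_closure

theorem isBounded_setOf_forall_mem_Ioo (ι : Type*) [Fintype ι] (a b : ℝ) :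
    IsBounded {y : EuclideanSpace ℝ ι | ∀ i, y i ∈ Set.Ioo a b} :=
  ((PiLp.antilipschitzWith_ofLp 2 _).isBounded_preimage
    (Metric.isBounded_Icc (fun _ => a : ι → ℝ) fun _ => b)).subset
    fun _ hy => ⟨fun i => (hy i).1.le, fun i => (hy i).2.le⟩

section Frobenius

variable {d : ℕ}

def frobₗ : Matrix (Fin d) (Fin d) ℝ →ₗ[ℝ] Matrix (Fin d) (Fin d) ℝ →ₗ[ℝ] ℝ :=
  LinearMap.mk₂ ℝ frob
    (fun A A' B => by simp only [frob, Matrix.add_apply, add_mul, sum_add_distrib])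
    (fun c A B => by simp only [frob, Matrix.smul_apply, smul_eq_mul, mul_sum, mul_assoc])
    (fun A B B' => by simp only [frob, Matrix.add_apply, mul_add, sum_add_distrib])
    (fun c A B => by simp only [frob, Matrix.smul_apply, smul_eq_mul, mul_sum, mul_left_comm])

theorem frobₗ_apply (A B : Matrix (Fin d) (Fin d) ℝ) : frobₗ A B = frob A B := rfl

theorem frob_comm (A B : Matrix (Fin d) (Fin d) ℝ) : frob A B = frob B A := by
  simp only [frob, mul_comm]

theorem frob_self_nonneg (A : Matrix (Fin d) (Fin d) ℝ) : 0 ≤ frob A A :=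
  sum_nonneg fun _ _ => sum_nonneg fun _ _ => mul_self_nonneg _

theorem frob_sub_right (A B C : Matrix (Fin d) (Fin d) ℝ) :
    frob A (B - C) = frob A B - frob A C := by
  simp only [← frobₗ_apply, map_sub]

theorem frob_sum_smul_self {ι κ : Type*} [Fintype ι] [Fintype κ] (c : ι → κ → ℝ)
    (A : ι → κ → Matrix (Fin d) (Fin d) ℝ) :
    frob (∑ i, ∑ j, c i j • A i j) (∑ i, ∑ j, c i j • A i j) =
      ∑ i, ∑ j, ∑ m, ∑ n, c i j * c m n * frob (A i j) (A m n) := by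
  simp only [← frobₗ_apply, map_sum, LinearMap.sum_apply, map_smul, LinearMap.smul_apply,
    smul_eq_mul, mul_sum, mul_assoc]
  refine sum_congr rfl fun _ _ => sum_congr rfl fun _ _ =>
    sum_congr rfl fun _ _ => sum_congr rfl fun _ _ => ?_
  rw [frobₗ_apply, frobₗ_apply, frob_comm]

theorem integral_frob_sum_smul_self {X ι κ : Type*} [MeasurableSpace X] {μ : Measure X}
    [Fintype ι] [Fintype κ] (c : ι → κ → ℝ) {G : ι → κ → X → Matrix (Fin d) (Fin d) ℝ}
    (hG : ∀ i j m n, Integrable (fun x => frob (G i j x) (G m n x)) μ) :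
    ∫ x, frob (∑ i, ∑ j, c i j • G i j x) (∑ i, ∑ j, c i j • G i j x) ∂μ =
      ∑ i, ∑ j, ∑ m, ∑ n, c i j * c m n * ∫ x, frob (G i j x) (G m n x) ∂μ := by
  simp (disch := fun_prop) only [frob_sum_smul_self, integral_finsetSum, integral_const_mul]

@[fun_prop]
theorem Continuous.frob {X : Type*} [TopologicalSpace X] {A B : X → Matrix (Fin d) (Fin d) ℝ}
    (hA : Continuous A) (hB : Continuous B) : Continuous fun x => _root_.frob (A x) (B x) := by
  unfold _root_.frob; fun_prop

end Frobenius

section SymmetrizedGradient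

variable {d : ℕ}

theorem symGrad_isSymm (v : EuclideanSpace ℝ (Fin d) → EuclideanSpace ℝ (Fin d))
    (y : EuclideanSpace ℝ (Fin d)) : (symGrad v y).IsSymm :=
  Matrix.IsSymm.ext fun m n => by simp only [symGrad, add_comm]

theorem symGrad_sub {v w : EuclideanSpace ℝ (Fin d) → EuclideanSpace ℝ (Fin d)}
    {y : EuclideanSpace ℝ (Fin d)} (hv : DifferentiableAt ℝ v y) (hw : DifferentiableAt ℝ w y) :
    symGrad (fun z => v z - w z) y = symGrad v y - symGrad w y := by
  ext m n
  simp only [symGrad, fderiv_fun_sub hv hw, sub_apply, PiLp.sub_apply, Matrix.sub_apply]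
  ring

theorem ContDiff.continuous_symGrad {v : EuclideanSpace ℝ (Fin d) → EuclideanSpace ℝ (Fin d)}
    (hv : ContDiff ℝ 1 v) : Continuous (symGrad v) := by
  have := hv.continuous_fderiv one_ne_zero
  unfold symGrad
  fun_prop

theorem Pfield_eq_smulRight (i j : Fin d) :
    Pfield i j = ⇑((EuclideanSpace.proj j).smulRight (EuclideanSpace.single i (1 : ℝ))) := by
  ext y k
  simp [Pfield]

theorem contDiff_Pfield (i j : Fin d) {k : WithTop ℕ∞} : ContDiff ℝ k (Pfield i j) := by
  rw [Pfield_eq_smulRight]; exact ContinuousLinearMap.contDiff _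

theorem fderiv_Pfield_apply (i j : Fin d) (y v : EuclideanSpace ℝ (Fin d)) :
    fderiv ℝ (Pfield i j) y v = Pfield i j v := by
  rw [Pfield_eq_smulRight, ContinuousLinearMap.fderiv]

theorem frob_symGrad_Pfield {A : Matrix (Fin d) (Fin d) ℝ} (hA : A.IsSymm) (i j : Fin d)
    (y : EuclideanSpace ℝ (Fin d)) : frob A (symGrad (Pfield i j) y) = A i j := by
  simp only [frob, symGrad, fderiv_Pfield_apply, Pfield, PiLp.single_apply,
    mul_div_assoc', mul_add, add_div, sum_add_distrib, ← sum_div, mul_ite, mul_one, mul_zero,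
    sum_ite_irrel, sum_const_zero, sum_ite_eq, sum_ite_eq', mem_univ, if_true, hA.apply]
  ring

theorem setIntegral_frob_symGrad_Pfield_sub {s : Set (EuclideanSpace ℝ (Fin d))}
    (hs : IsBounded s) {v w : EuclideanSpace ℝ (Fin d) → EuclideanSpace ℝ (Fin d)}
    (hv : ContDiff ℝ 1 v) (hw : ContDiff ℝ 1 w) (m n : Fin d) :
    ∫ y in s, frob (symGrad v y) (symGrad (fun z => Pfield m n z - w z) y) =
      (∫ y in s, symGrad v y m n) - ∫ y in s, frob (symGrad v y) (symGrad w y) := by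
  have hpt (y : EuclideanSpace ℝ (Fin d)) :
      frob (symGrad v y) (symGrad (fun z => Pfield m n z - w z) y) =
        symGrad v y m n - frob (symGrad v y) (symGrad w y) := by
    rw [symGrad_sub ((contDiff_Pfield m n (k := 1)).differentiable one_ne_zero y)
      (hw.differentiable one_ne_zero y), frob_sub_right, frob_symGrad_Pfield (symGrad_isSymm v y)]
  have hDv := hv.continuous_symGrad
  have hDw := hw.continuous_symGrad
  simp only [hpt]
  exact integral_sub ((by fun_prop : Continuous _).integrableOn_of_isBounded hs)
    ((by fun_prop : Continuous _).integrableOn_of_isBounded hs)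

end SymmetrizedGradient

theorem effective_viscosity_biquadratic_representation_general
    (d : ℕ)
    (Y : Set (EuclideanSpace ℝ (Fin d)))
    (hY : Y = {y : EuclideanSpace ℝ (Fin d) | ∀ i, y i ∈ Set.Ioo (0 : ℝ) 1})
    (χ : Fin d → Fin d → EuclideanSpace ℝ (Fin d) → EuclideanSpace ℝ (Fin d))
    (hχC1 : ∀ i j, ContDiff ℝ 1 (χ i j))
    (hcell : ∀ i j m n : Fin d,
      ∫ y in Y, frob (symGrad (fun z => Pfield i j z - χ i j z) y) (symGrad (χ m n) y) = 0)
    (N : Fin d → Fin d → Fin d → Fin d → ℝ)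
    (hN : ∀ i j m n : Fin d,
      N i j m n = ∫ y in Y, symGrad (fun z => Pfield i j z - χ i j z) y m n) :
    ∀ ζ η : EuclideanSpace ℝ (Fin d),
      (∑ i, ∑ j, ∑ m, ∑ n, N i j m n * ζ i * ζ m * η j * η n =
        ∫ y in Y,
          frob (∑ i, ∑ j, (ζ i * η j) • symGrad (fun z => Pfield i j z - χ i j z) y)
            (∑ i, ∑ j, (ζ i * η j) • symGrad (fun z => Pfield i j z - χ i j z) y)) ∧
      0 ≤ ∑ i, ∑ j, ∑ m, ∑ n, N i j m n * ζ i * ζ m * η j * η n := by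
  intro ζ η
  have hYb : IsBounded Y := hY ▸ isBounded_setOf_forall_mem_Ioo (Fin d) 0 1
  have hG (i j : Fin d) : ContDiff ℝ 1 fun z => Pfield i j z - χ i j z :=
    (contDiff_Pfield i j).sub (hχC1 i j)
  have hint (i j m n : Fin d) : Integrable (fun y => frob
      (symGrad (fun z => Pfield i j z - χ i j z) y) (symGrad (fun z => Pfield m n z - χ m n z) y))
      (volume.restrict Y) :=
    ((hG i j).continuous_symGrad.frob (hG m n).continuous_symGrad).integrableOn_of_isBounded hYb
  have hrep : ∑ i, ∑ j, ∑ m, ∑ n, N i j m n * ζ i * ζ m * η j * η n = ∫ y in Y,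
      frob (∑ i, ∑ j, (ζ i * η j) • symGrad (fun z => Pfield i j z - χ i j z) y)
        (∑ i, ∑ j, (ζ i * η j) • symGrad (fun z => Pfield i j z - χ i j z) y) := by
    simp only [integral_frob_sum_smul_self _ hint,
      setIntegral_frob_symGrad_Pfield_sub hYb (hG _ _) (hχC1 _ _), hcell, sub_zero, ← hN]
    exact sum_congr rfl fun _ _ => sum_congr rfl fun _ _ =>
      sum_congr rfl fun _ _ => sum_congr rfl fun _ _ => by ring
  exact ⟨hrep, hrep ▸ integral_nonneg fun _ => frob_self_nonneg _⟩

/-- Under the cell-problem orthogonality hypotheses, the biquadratic form of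
the effective viscosity tensor has the nonnegative integral representation
`Υ(ζ,η) = Σ N^{ij}_{mn} ζ_i ζ_m η_j η_n = ∫_Y ‖Σ_{i,j} ζ_i η_j D(P^{ij} − χ^{ij})(y)‖_F² dy ≥ 0`. -/
theorem effective_viscosity_biquadratic_representation
    (d : ℕ) (hd : d = 2 ∨ d = 3)
    (Y : Set (EuclideanSpace ℝ (Fin d)))
    (hY : Y = {y : EuclideanSpace ℝ (Fin d) | ∀ i, y i ∈ Set.Ioo (0 : ℝ) 1})
    (χ : Fin d → Fin d → EuclideanSpace ℝ (Fin d) → EuclideanSpace ℝ (Fin d))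
    (hχC1 : ∀ i j, ContDiff ℝ 1 (χ i j))
    (hχper : ∀ (i j : Fin d) (y : EuclideanSpace ℝ (Fin d)) (l : Fin d),
      χ i j (y + EuclideanSpace.single l 1) = χ i j y)
    (hcell : ∀ i j m n : Fin d,
      ∫ y in Y, frob (symGrad (fun z => Pfield i j z - χ i j z) y) (symGrad (χ m n) y) = 0)
    (N : Fin d → Fin d → Fin d → Fin d → ℝ)
    (hN : ∀ i j m n : Fin d,
      N i j m n = ∫ y in Y, symGrad (fun z => Pfield i j z - χ i j z) y m n) :
    ∀ ζ η : EuclideanSpace ℝ (Fin d),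
      (∑ i, ∑ j, ∑ m, ∑ n, N i j m n * ζ i * ζ m * η j * η n =
        ∫ y in Y,
          frob (∑ i, ∑ j, (ζ i * η j) • symGrad (fun z => Pfield i j z - χ i j z) y)
            (∑ i, ∑ j, (ζ i * η j) • symGrad (fun z => Pfield i j z - χ i j z) y)) ∧
      0 ≤ ∑ i, ∑ j, ∑ m, ∑ n, N i j m n * ζ i * ζ m * η j * η n :=
  effective_viscosity_biquadratic_representation_general d Y hY χ hχC1 hcell N hN
end
end
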